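/- Let s ≥ 1 be an integer and let a_1 < a_2 be positive integers with gcd(a_1, a_2) = 1. Then the s-Frobenius number of the pair satisfies F_s(a_1, a_2) = s·a_1·a_2 − (a_1 + a_2). -/

import Mathlib

/-!
Shifting `x` by `b` maps the representations `a x + b y = n` bijectively onto the
representations of `n + a b` with `x ≥ b`. By coprimality at most one representation of any
integer has `x < b`, and for `n > a b - a - b` there is one. Hence each step of `a b` adds at
most one representation, and exactly one above `a b - a - b`. Since `a b - a - b` itself has no
representation (Sylvester), `s a b - a - b` has at most `s - 1`, and every larger integer at
least `s`.
-/

def representations (a b : ℕ) (n : ℤ) : Set (ℕ × ℕ) :=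
  {z | (a : ℤ) * z.1 + (b : ℤ) * z.2 = n}

namespace representations

variable {a b : ℕ}

@[simp]
theorem mem_iff {n : ℤ} {z : ℕ × ℕ} :
    z ∈ representations a b n ↔ (a : ℤ) * z.1 + (b : ℤ) * z.2 = n :=
  Iff.rfl

theorem finite (ha : 0 < a) (hb : 0 < b) (n : ℤ) : (representations a b n).Finite := by
  refine ((Set.finite_Iic n.toNat).prod (Set.finite_Iic n.toNat)).subset ?_
  rintro ⟨x, y⟩ h
  rw [mem_iff] at h
  have hx : (x : ℤ) ≤ n := by nlinarith
  have hy : (y : ℤ) ≤ n := by nlinarith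
  simp only [Set.mem_prod, Set.mem_Iic]
  constructor <;> omega

theorem sylvester_eq_empty (hb : 0 < b) (hab : a.Coprime b) :
    representations a b (a * b - a - b) = ∅ := by
  refine Set.eq_empty_of_forall_notMem fun ⟨x, y⟩ h => ?_
  rw [mem_iff] at h
  have hcop : IsCoprime (a : ℤ) b := Nat.isCoprime_iff_coprime.2 hab
  have hbx : (b : ℤ) ∣ x + 1 :=
    hcop.symm.dvd_of_dvd_mul_left ⟨a - y - 1, by linear_combination h⟩
  have hay : (a : ℤ) ∣ y + 1 :=
    hcop.dvd_of_dvd_mul_left ⟨b - x - 1, by linear_combination h⟩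
  have hx := Int.le_of_dvd (by positivity) hbx
  have hy := Int.le_of_dvd (by positivity) hay
  nlinarith

theorem add_mul_eq_union (n : ℤ) :
    representations a b (n + a * b) =
      (fun z : ℕ × ℕ => (z.1 + b, z.2)) '' representations a b n ∪
        {z ∈ representations a b (n + a * b) | z.1 < b} := by
  ext ⟨x, y⟩
  simp only [Set.mem_union, Set.mem_image, Set.mem_ofPred_eq, mem_iff, Prod.mk.injEq,
    Prod.exists]
  constructor
  · intro h
    by_cases hx : b ≤ x
    · exact Or.inl ⟨x - b, y, by push_cast [hx]; linear_combination h, Nat.sub_add_cancel hx, rfl⟩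
    · exact Or.inr ⟨h, by omega⟩
  · rintro (⟨x, y, h, rfl, rfl⟩ | ⟨h, -⟩)
    · push_cast
      linear_combination h
    · exact h

theorem ncard_add_mul (ha : 0 < a) (hb : 0 < b) (n : ℤ) :
    (representations a b (n + a * b)).ncard =
      (representations a b n).ncard + {z ∈ representations a b (n + a * b) | z.1 < b}.ncard := by
  conv_lhs => rw [add_mul_eq_union]
  have hdisj : Disjoint ((fun z : ℕ × ℕ => (z.1 + b, z.2)) '' representations a b n)
      {z ∈ representations a b (n + a * b) | z.1 < b} := by
    rw [Set.disjoint_left]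
    rintro _ ⟨z, -, rfl⟩ ⟨-, h⟩
    exact absurd h (by simp)
  rw [Set.ncard_union_eq hdisj ((finite ha hb n).image _) ((finite ha hb _).sep _),
    Set.ncard_image_of_injective _ fun z w h => Prod.ext_iff.2 (by simpa using h)]

theorem subsingleton_fst_lt (hab : a.Coprime b) (n : ℤ) :
    {z ∈ representations a b n | z.1 < b}.Subsingleton := by
  rintro ⟨x, y⟩ ⟨h, hx⟩ ⟨x', y'⟩ ⟨h', hx'⟩
  simp only [mem_iff] at h h' hx hx'
  have hnat : a * x + b * y = a * x' + b * y' := by exact_mod_cast h.trans h'.symm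
  have hmod : a * x ≡ a * x' [MOD b] := by
    simpa [Nat.ModEq, Nat.add_mul_mod_self_left] using congrArg (· % b) hnat
  have hxx : x = x' := (Nat.ModEq.cancel_left_of_coprime hab.symm hmod).eq_of_lt_of_lt hx hx'
  subst hxx
  have hyy : b * y = b * y' := by omega
  exact Prod.ext rfl (Nat.eq_of_mul_eq_mul_left (by omega) hyy)

theorem exists_fst_lt (hb : 0 < b) (hab : a.Coprime b) {n : ℤ} (hn : a * b - a - b < n) :
    ∃ z ∈ representations a b n, z.1 < b := by
  obtain ⟨u, v, huv⟩ := Nat.isCoprime_iff_coprime.2 hab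
  have hb' : (0 : ℤ) < b := by exact_mod_cast hb
  -- `u` inverts `a` modulo `b`, so `x := n u mod b` solves `a x ≡ n (mod b)`.
  have hx0 : 0 ≤ n * u % b := Int.emod_nonneg _ hb'.ne'
  have hxb : n * u % b < b := Int.emod_lt_of_pos _ hb'
  obtain ⟨y, hy⟩ : (b : ℤ) ∣ n - a * (n * u % b) :=
    ⟨n * v + a * (n * u / b), by rw [Int.emod_def]; linear_combination (-n) * huv⟩
  generalize n * u % b = x at hx0 hxb hy
  have hy0 : 0 ≤ y := by nlinarith
  lift x to ℕ using hx0
  lift y to ℕ using hy0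
  exact ⟨(x, y), by rw [mem_iff]; linear_combination -hy, by exact_mod_cast hxb⟩

theorem ncard_le_pred (ha : 0 < a) (hb : 0 < b) (hab : a.Coprime b) {s : ℕ} (hs : 1 ≤ s) :
    (representations a b ((s : ℤ) * a * b - (a + b))).ncard ≤ s - 1 := by
  induction s, hs using Nat.le_induction with
  | base =>
    rw [Nat.cast_one, one_mul, ← sub_sub, sylvester_eq_empty hb hab, Set.ncard_empty]
  | succ s hs ih =>
    have hshift : ((s + 1 : ℕ) : ℤ) * a * b - (a + b) = (s * a * b - (a + b)) + a * b := by
      push_cast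
      ring
    have hlow := (Set.ncard_le_one ((finite ha hb _).sep _)).2
      (subsingleton_fst_lt hab (((s : ℤ) * a * b - (a + b)) + a * b))
    rw [hshift, ncard_add_mul ha hb]
    omega

theorem le_ncard_of_lt (ha : 0 < a) (hb : 0 < b) (hab : a.Coprime b) (s : ℕ) {n : ℤ}
    (hn : (s : ℤ) * a * b - (a + b) < n) : s ≤ (representations a b n).ncard := by
  induction s generalizing n with
  | zero => exact Nat.zero_le _
  | succ s ih =>
    push_cast at hn
    have hab0 : (0 : ℤ) ≤ s * a * b := by positivity
    obtain ⟨z, hz⟩ := exists_fst_lt hb hab (n := n) (by linarith)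
    have hlow : 0 < {z ∈ representations a b n | z.1 < b}.ncard :=
      Set.Nonempty.ncard_pos ((finite ha hb n).sep _) ⟨z, hz⟩
    have hcount := ncard_add_mul ha hb (n - a * b)
    rw [sub_add_cancel] at hcount
    have hprev := ih (n := n - a * b) (by linarith)
    omega

theorem isGreatest_ncard_lt (ha : 0 < a) (hb : 0 < b) (hab : a.Coprime b) {s : ℕ}
    (hs : 1 ≤ s) :
    IsGreatest {n : ℤ | (representations a b n).ncard < s} ((s : ℤ) * a * b - (a + b)) :=
  ⟨(ncard_le_pred ha hb hab hs).trans_lt (Nat.sub_lt hs one_pos),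
    fun _ hn => not_lt.1 fun h => (le_ncard_of_lt ha hb hab s h).not_gt hn⟩

end representations

/-- **The s-Frobenius number of two coprime integers** (Beck–Robins):
for `0 < a₁ < a₂` with `gcd(a₁, a₂) = 1` and `s ≥ 1`, the largest integer having
fewer than `s` representations `a₁ x + a₂ y` with `x, y ∈ ℤ_{≥0}` equals
`s·a₁·a₂ − (a₁ + a₂)`. -/
theorem sFrobenius_dim_two {s a₁ a₂ : ℕ} (hs : 1 ≤ s) (h₁ : 0 < a₁) (h₁₂ : a₁ < a₂)
    (hgcd : Nat.gcd a₁ a₂ = 1) (F : ℤ)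
    (hF : IsGreatest
      {b : ℤ | {z : ℕ × ℕ | (a₁ : ℤ) * (z.1 : ℤ) + (a₂ : ℤ) * (z.2 : ℤ) = b}.ncard < s} F) :
    F = (s : ℤ) * a₁ * a₂ - (a₁ + a₂) :=
  hF.unique (representations.isGreatest_ncard_lt h₁ (h₁.trans h₁₂) hgcd hs)
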